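/- Let G be a graph and {A_i}_{i=1}^k a k-way partition of V. Then max_i Φ_G(A_i) ≥ ρ(k) ≥ λ_k / 2, where ρ(k) is the k-way expansion and λ_k is the k-th smallest eigenvalue of the normalized Laplacian. Consequently, if disjoint nonempty sets C_1, ..., C_k each satisfy Φ_G(C_i) < λ_k/2, we reach a contradiction; i.e., no k-way partition can have all parts of conductance below λ_k/2. -/

import Mathlib

open Finset

noncomputable def deg {n : ℕ} (w : Fin n → Fin n → ℝ) (u : Fin n) : ℝ := ∑ v, w u v

noncomputable def volw {n : ℕ} (w : Fin n → Fin n → ℝ) (S : Finset (Fin n)) : ℝ :=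
  ∑ u ∈ S, deg w u

noncomputable def cutw {n : ℕ} (w : Fin n → Fin n → ℝ) (S T : Finset (Fin n)) : ℝ :=
  ∑ u ∈ S, ∑ v ∈ T, w u v

/-!
For a step function `c ∘ p`, constant on the parts `Aᵢ = p⁻¹ {i}`, the vector
`x = D^{1/2} (c ∘ p)` satisfies `‖x‖² = ∑ᵢ cᵢ² vol(Aᵢ)` and
`⟪x, L x⟫ = ½ ∑ w(u,t) (c_{p u} - c_{p t})² ≤ 2 ∑ᵢ cᵢ² w(Aᵢ, Aᵢᶜ)`.
Such vectors form a `k`-dimensional space, while the eigenvectors of the `n - k + 1` largest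
eigenvalues span a space on which `⟪x, L x⟫ ≥ λ_k ‖x‖²`; the two spaces meet in some `x ≠ 0`, so
`λ_k ∑ᵢ cᵢ² vol(Aᵢ) ≤ 2 ∑ᵢ cᵢ² w(Aᵢ, Aᵢᶜ)` with `c ≠ 0`, and some part has `Φ(Aᵢ) ≥ λ_k / 2`.
-/

open scoped RealInnerProductSpace

theorem Orthonormal.mul_inner_self_le_inner_apply_of_mem_span {ι E : Type*} [Fintype ι]
    [NormedAddCommGroup E] [InnerProductSpace ℝ E] {v : ι → E} (hv : Orthonormal ℝ v)
    {T : E →ₗ[ℝ] E} {μ : ι → ℝ} (hT : ∀ i, T (v i) = μ i • v i) {r : ℝ} (hr : ∀ i, r ≤ μ i)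
    {x : E} (hx : x ∈ Submodule.span ℝ (Set.range v)) :
    r * ⟪x, x⟫ ≤ ⟪x, T x⟫ := by
  obtain ⟨b, rfl⟩ := (Submodule.mem_span_range_iff_exists_fun ℝ).mp hx
  have hTx : T (∑ i, b i • v i) = ∑ i, (b i * μ i) • v i := by
    simp only [map_sum, map_smul, hT, smul_smul]
  rw [hTx, hv.inner_sum, hv.inner_sum, mul_sum]
  refine sum_le_sum fun i _ => ?_
  simp only [conj_trivial]
  nlinarith [hr i, mul_self_nonneg (b i)]

theorem Submodule.exists_mem_inf_ne_zero_of_finrank_lt_add {K V : Type*} [DivisionRing K]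
    [AddCommGroup V] [Module K V] [FiniteDimensional K V] (U W : Submodule K V)
    (h : Module.finrank K V < Module.finrank K U + Module.finrank K W) :
    ∃ x ∈ U, x ∈ W ∧ x ≠ 0 := by
  have hsum := Submodule.finrank_sup_add_finrank_inf_eq U W
  have hsup := Submodule.finrank_le (U ⊔ W)
  obtain ⟨x, hx, hx0⟩ := Submodule.exists_mem_ne_zero_of_ne_bot (p := U ⊓ W) fun hbot => by
    rw [hbot, finrank_bot] at hsum
    omega
  exact ⟨x, hx.1, hx.2, hx0⟩

theorem Matrix.IsHermitian.exists_finrank_eq_sort_eigenvalue_mul_inner_le {n : ℕ}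
    {A : Matrix (Fin n) (Fin n) ℝ} (hA : A.IsHermitian) (j : Fin n) :
    ∃ W : Submodule ℝ (EuclideanSpace ℝ (Fin n)), Module.finrank ℝ W = n - j ∧
      ∀ x ∈ W, hA.eigenvalues (Tuple.sort hA.eigenvalues j) * ⟪x, x⟫ ≤
        ⟪x, Matrix.toLpLin 2 2 A x⟫ := by
  set σ := Tuple.sort hA.eigenvalues
  let v : Ici j → EuclideanSpace ℝ (Fin n) := fun i => hA.eigenvectorBasis (σ i)
  have hv : Orthonormal ℝ v :=
    hA.eigenvectorBasis.orthonormal.comp _ (σ.injective.comp Subtype.val_injective)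
  refine ⟨Submodule.span ℝ (Set.range v), ?_, fun x hx => ?_⟩
  · rw [finrank_span_eq_card hv.linearIndependent, Fintype.card_coe, Fin.card_Ici]
  refine hv.mul_inner_self_le_inner_apply_of_mem_span (μ := fun i => hA.eigenvalues (σ i))
    (fun i => ?_) (fun i => ?_) hx
  · simp only [v, Matrix.toLpLin_apply, hA.mulVec_eigenvectorBasis]
    rfl
  · exact Tuple.monotone_sort hA.eigenvalues (mem_Ici.mp i.2)

theorem exists_le_div_of_mul_sum_sq_mul_le {ι : Type*} [Fintype ι] {a b c : ι → ℝ} {r : ℝ}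
    (hb : ∀ i, 0 < b i) (hc : c ≠ 0) (h : r * ∑ i, c i ^ 2 * b i ≤ ∑ i, c i ^ 2 * a i) :
    ∃ i, r ≤ a i / b i := by
  by_contra! hlt
  obtain ⟨i₀, hi₀⟩ := Function.ne_iff.mp hc
  have : ∑ i, c i ^ 2 * a i < ∑ i, c i ^ 2 * (r * b i) := by
    refine sum_lt_sum (fun i _ => ?_) ⟨i₀, mem_univ _, ?_⟩
    · exact mul_le_mul_of_nonneg_left ((div_lt_iff₀ (hb i)).mp (hlt i)).le (sq_nonneg _)
    · exact mul_lt_mul_of_pos_left ((div_lt_iff₀ (hb i₀)).mp (hlt i₀)) (sq_pos_of_ne_zero hi₀)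
  rw [mul_sum] at h
  simp only [mul_left_comm r] at h
  linarith

section Graph

variable {n : ℕ} (w : Fin n → Fin n → ℝ)

noncomputable def normalizedLaplacian : Matrix (Fin n) (Fin n) ℝ :=
  1 - Matrix.of fun u v => w u v / (Real.sqrt (deg w u) * Real.sqrt (deg w v))

noncomputable def sqrtDegMul (f : Fin n → ℝ) : EuclideanSpace ℝ (Fin n) :=
  WithLp.toLp 2 fun u => Real.sqrt (deg w u) * f u

variable {w}

theorem inner_sqrtDegMul_self (hdeg : ∀ u, 0 ≤ deg w u) (f : Fin n → ℝ) :
    ⟪sqrtDegMul w f, sqrtDegMul w f⟫ = ∑ u, deg w u * f u ^ 2 := by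
  simp only [sqrtDegMul, EuclideanSpace.inner_toLp_toLp, dotProduct, star_trivial]
  refine sum_congr rfl fun u _ => ?_
  linear_combination f u ^ 2 * Real.mul_self_sqrt (hdeg u)

theorem inner_sqrtDegMul_normalizedLaplacian (hdeg : ∀ u, 0 < deg w u) (f : Fin n → ℝ) :
    ⟪sqrtDegMul w f, Matrix.toLpLin 2 2 (normalizedLaplacian w) (sqrtDegMul w f)⟫ =
      ∑ u, ∑ t, w u t * (f u ^ 2 - f u * f t) := by
  have hs : ∀ u, Real.sqrt (deg w u) ≠ 0 := fun u => (Real.sqrt_pos.mpr (hdeg u)).ne'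
  simp only [sqrtDegMul, Matrix.toLpLin_toLp, Matrix.toLin'_apply, EuclideanSpace.inner_toLp_toLp,
    dotProduct, star_trivial, normalizedLaplacian, Matrix.sub_mulVec, Matrix.one_mulVec,
    Pi.sub_apply, Matrix.mulVec, Matrix.of_apply]
  refine sum_congr rfl fun u _ => ?_
  have hcancel : ∀ t, w u t / (Real.sqrt (deg w u) * Real.sqrt (deg w t)) *
      (Real.sqrt (deg w t) * f t) * (Real.sqrt (deg w u) * f u) = w u t * (f u * f t) := by
    intro t
    field_simp [hs u, hs t]
  rw [sub_mul, sum_mul, sum_congr rfl fun t _ => hcancel t, mul_mul_mul_comm,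
    Real.mul_self_sqrt (hdeg u).le, deg, sum_mul, ← sum_sub_distrib]
  exact sum_congr rfl fun t _ => by ring

variable {k : ℕ} (w) (p : Fin n → Fin k)

noncomputable def sqrtDegStep : (Fin k → ℝ) →ₗ[ℝ] EuclideanSpace ℝ (Fin n) where
  toFun c := sqrtDegMul w fun u => c (p u)
  map_add' c d := by ext u; simp [sqrtDegMul, mul_add]
  map_smul' a c := by ext u; simp [sqrtDegMul, mul_left_comm]

variable {w p}

theorem sqrtDegStep_injective (hdeg : ∀ u, 0 < deg w u) (hp : Function.Surjective p) :
    Function.Injective (sqrtDegStep w p) := by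
  rw [← LinearMap.ker_eq_bot, LinearMap.ker_eq_bot']
  intro c hc
  funext i
  obtain ⟨u, rfl⟩ := hp i
  have hu : Real.sqrt (deg w u) * c (p u) = 0 := congrArg (· u) hc
  exact (mul_eq_zero.mp hu).resolve_left (Real.sqrt_pos.mpr (hdeg u)).ne'

theorem finrank_range_sqrtDegStep (hdeg : ∀ u, 0 < deg w u) (hp : Function.Surjective p) :
    Module.finrank ℝ (LinearMap.range (sqrtDegStep w p)) = k := by
  rw [LinearMap.finrank_range_of_inj (sqrtDegStep_injective hdeg hp), Module.finrank_fin_fun]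

theorem sum_deg_mul_sq_eq_sum_sq_mul_volw (c : Fin k → ℝ) :
    ∑ u, deg w u * c (p u) ^ 2 = ∑ i, c i ^ 2 * volw w {u | p u = i} := by
  rw [← sum_fiberwise univ p]
  refine sum_congr rfl fun i _ => ?_
  rw [volw, mul_sum]
  refine sum_congr rfl fun u hu => ?_
  rw [(mem_filter.mp hu).2, mul_comm]

theorem sum_cut_mul_sq_eq_sum_sq_mul_cutw (c : Fin k → ℝ) :
    ∑ u, ∑ t, (if p u = p t then 0 else w u t) * c (p u) ^ 2 =
      ∑ i, c i ^ 2 * cutw w {u | p u = i} ({u | p u = i} : Finset (Fin n))ᶜ := by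
  rw [← sum_fiberwise univ p]
  refine sum_congr rfl fun i _ => ?_
  rw [cutw, mul_sum]
  refine sum_congr rfl fun u hu => ?_
  rw [(mem_filter.mp hu).2, mul_sum, compl_filter, sum_filter]
  refine sum_congr rfl fun t _ => ?_
  by_cases h : p t = i
  · simp [h]
  · simp [h, Ne.symm h, mul_comm]

theorem sum_mul_sq_sub_mul_le_two_mul_sum_cut (hsymm : ∀ u v, w u v = w v u)
    (hnonneg : ∀ u v, 0 ≤ w u v) (c : Fin k → ℝ) :
    ∑ u, ∑ t, w u t * (c (p u) ^ 2 - c (p u) * c (p t)) ≤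
      2 * ∑ u, ∑ t, (if p u = p t then 0 else w u t) * c (p u) ^ 2 := by
  set g : Fin n → Fin n → ℝ := fun u t => if p u = p t then 0 else w u t
  -- `a² - ab ≤ (3a² + b²) / 2` is `0 ≤ (a + b)²`; symmetrizing the right side
  -- doubles each cut edge.
  have hterm : ∀ u t, w u t * (c (p u) ^ 2 - c (p u) * c (p t)) ≤
      g u t * (3 / 2 * c (p u) ^ 2 + 1 / 2 * c (p t) ^ 2) := by
    intro u t
    by_cases h : p u = p t
    · simp only [g, if_pos h, h, sq, sub_self, mul_zero, zero_mul, le_refl]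
    · simp only [g, if_neg h]
      nlinarith [mul_nonneg (hnonneg u t) (sq_nonneg (c (p u) + c (p t)))]
  have hg : ∀ u t, g u t = g t u := fun u t => by simp only [g, eq_comm, hsymm u t]
  have hswap : ∑ u, ∑ t, g u t * c (p t) ^ 2 = ∑ u, ∑ t, g u t * c (p u) ^ 2 := by
    rw [sum_comm]
    exact sum_congr rfl fun u _ => sum_congr rfl fun t _ => by rw [hg]
  calc ∑ u, ∑ t, w u t * (c (p u) ^ 2 - c (p u) * c (p t))
      ≤ ∑ u, ∑ t, g u t * (3 / 2 * c (p u) ^ 2 + 1 / 2 * c (p t) ^ 2) :=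
        sum_le_sum fun u _ => sum_le_sum fun t _ => hterm u t
    _ = 3 / 2 * ∑ u, ∑ t, g u t * c (p u) ^ 2 + 1 / 2 * ∑ u, ∑ t, g u t * c (p t) ^ 2 := by
        simp only [mul_sum, ← sum_add_distrib]
        exact sum_congr rfl fun u _ => sum_congr rfl fun t _ => by ring
    _ = 2 * ∑ u, ∑ t, g u t * c (p u) ^ 2 := by rw [hswap]; ring

theorem inner_sqrtDegStep_self (hdeg : ∀ u, 0 ≤ deg w u) (c : Fin k → ℝ) :
    ⟪sqrtDegStep w p c, sqrtDegStep w p c⟫ = ∑ i, c i ^ 2 * volw w {u | p u = i} :=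
  (inner_sqrtDegMul_self hdeg _).trans (sum_deg_mul_sq_eq_sum_sq_mul_volw c)

theorem inner_sqrtDegStep_normalizedLaplacian_le (hsymm : ∀ u v, w u v = w v u)
    (hnonneg : ∀ u v, 0 ≤ w u v) (hdeg : ∀ u, 0 < deg w u) (c : Fin k → ℝ) :
    ⟪sqrtDegStep w p c, Matrix.toLpLin 2 2 (normalizedLaplacian w) (sqrtDegStep w p c)⟫ ≤
      2 * ∑ i, c i ^ 2 * cutw w {u | p u = i} ({u | p u = i} : Finset (Fin n))ᶜ := by
  rw [← sum_cut_mul_sq_eq_sum_sq_mul_cutw]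
  exact (inner_sqrtDegMul_normalizedLaplacian hdeg _).trans_le
    (sum_mul_sq_sub_mul_le_two_mul_sum_cut hsymm hnonneg c)

end Graph

theorem exists_eq_filter_of_disjoint_of_cover {α ι : Type*} [Fintype α] [DecidableEq ι]
    {A : ι → Finset α} (hdisj : ∀ i j, i ≠ j → Disjoint (A i) (A j))
    (hcover : ∀ v, ∃ i, v ∈ A i) :
    ∃ p : α → ι, A = fun i => ({v | p v = i} : Finset α) := by
  choose p hp using hcover
  refine ⟨p, funext fun i => Finset.ext fun v => ?_⟩
  rw [mem_filter_univ]
  refine ⟨fun hv => ?_, fun h => h ▸ hp v⟩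
  by_contra h
  exact disjoint_left.mp (hdisj _ _ h) (hp v) hv

/-- For any k-way partition `A_1, ..., A_k` of the vertex set of
`G`, `max_i Φ_G(A_i) ≥ ρ(k) ≥ λ_k / 2`, where `λ_k` is the `k`-th smallest
eigenvalue of the normalized Laplacian; i.e. some part `A_i` has conductance at
least `λ_k / 2`.  Consequently no k-way partition can have all parts of
conductance below `λ_k / 2`. -/
theorem exists_part_conductance_ge_lambda_div_two
    (n k : ℕ) (hk : 0 < k) (hkn : k ≤ n)
    (w : Fin n → Fin n → ℝ)
    (hsymm : ∀ u v, w u v = w v u)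
    (hnonneg : ∀ u v, 0 ≤ w u v)
    (hdeg : ∀ u, 0 < deg w u)
    (L : Matrix (Fin n) (Fin n) ℝ)
    (hL : L = 1 - Matrix.of (fun u v =>
      w u v / (Real.sqrt (deg w u) * Real.sqrt (deg w v))))
    (hHerm : L.IsHermitian)
    (lam : ℝ)
    -- `lam` is the k-th smallest eigenvalue of the normalized Laplacian
    (hlam : lam = hHerm.eigenvalues (Tuple.sort hHerm.eigenvalues ⟨k - 1, by omega⟩))
    (A : Fin k → Finset (Fin n))
    (hne : ∀ i, (A i).Nonempty)
    (hdisj : ∀ i j, i ≠ j → Disjoint (A i) (A j))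
    (hcover : ∀ v : Fin n, ∃ i, v ∈ A i) :
    ∃ i, lam / 2 ≤ cutw w (A i) (A i)ᶜ / volw w (A i) := by
  obtain ⟨p, rfl⟩ := exists_eq_filter_of_disjoint_of_cover hdisj hcover
  have hp : Function.Surjective p := fun i => by
    obtain ⟨u, hu⟩ := hne i
    exact ⟨u, by simpa using hu⟩
  obtain ⟨W, hWrank, hW⟩ := hHerm.exists_finrank_eq_sort_eigenvalue_mul_inner_le ⟨k - 1, by omega⟩
  rw [← hlam] at hW
  obtain ⟨_, ⟨c, rfl⟩, hcW, hc0⟩ := Submodule.exists_mem_inf_ne_zero_of_finrank_lt_add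
    (LinearMap.range (sqrtDegStep w p)) W (by
      rw [finrank_range_sqrtDegStep hdeg hp, hWrank, finrank_euclideanSpace_fin]
      simp only
      omega)
  have hc : c ≠ 0 := by rintro rfl; exact hc0 (map_zero _)
  refine exists_le_div_of_mul_sum_sq_mul_le (fun i => sum_pos (fun u _ => hdeg u) (hne i)) hc ?_
  have hL' : L = normalizedLaplacian w := hL
  subst hL'
  calc lam / 2 * ∑ i, c i ^ 2 * volw w {u | p u = i}
      = lam * ⟪sqrtDegStep w p c, sqrtDegStep w p c⟫ / 2 := by
        rw [inner_sqrtDegStep_self fun u => (hdeg u).le]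
        ring
    _ ≤ ⟪sqrtDegStep w p c, Matrix.toLpLin 2 2 (normalizedLaplacian w) (sqrtDegStep w p c)⟫ / 2 :=
        by gcongr; exact hW _ hcW
    _ ≤ ∑ i, c i ^ 2 * cutw w {u | p u = i} ({u | p u = i} : Finset (Fin n))ᶜ := by
        linarith [inner_sqrtDegStep_normalizedLaplacian_le hsymm hnonneg hdeg (p := p) c]
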